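/- Let M be an (|A|+ℵ₀)⁺-saturated model containing A, and p ∈ S(M). If p forks over A then p splits strongly over A. (Equivalently, if p does not split strongly over A, then p does not fork over A.) -/

import Mathlib

open FirstOrder Cardinal

universe u

variable {L : FirstOrder.Language.{u, u}} {M : Type u} [L.Structure M]

/-- A formula in `m` free variables together with a tuple of parameters from `M`. -/
structure PFormula (L : FirstOrder.Language.{u, u}) (M : Type u) [L.Structure M] (m : ℕ) where
  n : ℕ
  toFormula : L.Formula (Fin m ⊕ Fin n)
  par : Fin n → M

namespace PFormula

variable {m : ℕ}

/-- Realization of a parametrized formula by an `m`-tuple. -/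
def Realize (ψ : PFormula L M m) (a : Fin m → M) : Prop :=
  ψ.toFormula.Realize (Sum.elim a ψ.par)

/-- Realization of a parametrized formula in one variable by an element. -/
def Realize1 (ψ : PFormula L M 1) (a : M) : Prop :=
  ψ.Realize fun _ => a

/-- Negation of a parametrized formula. -/
def not (ψ : PFormula L M m) : PFormula L M m :=
  ⟨ψ.n, ψ.toFormula.not, ψ.par⟩

/-- The parameters of `ψ` all lie in `B`. -/
def Over (ψ : PFormula L M m) (B : Set M) : Prop :=
  ∀ i, ψ.par i ∈ B

end PFormula

/-- Two tuples have the same type over the parameter set `A`. -/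
def SameTypeOver (L : FirstOrder.Language.{u, u}) {M : Type u} [L.Structure M]
    (A : Set M) {γ : Type} (b c : γ → M) : Prop :=
  ∀ (k : ℕ) (φ : L.Formula (γ ⊕ Fin k)) (a : Fin k → M),
    (∀ i, a i ∈ A) → (φ.Realize (Sum.elim b a) ↔ φ.Realize (Sum.elim c a))

/-- A sequence of `d`-tuples, indexed by a linear order, is indiscernible over `A`. -/
def IndiscTupleSeqOver (L : FirstOrder.Language.{u, u}) {M : Type u} [L.Structure M]
    (A : Set M) {ι : Type*} [LinearOrder ι] {d : ℕ} (f : ι → Fin d → M) : Prop :=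
  ∀ (n : ℕ) (s t : Fin n → ι), StrictMono s → StrictMono t →
    SameTypeOver L A (fun q : Fin n × Fin d => f (s q.1) q.2)
      (fun q : Fin n × Fin d => f (t q.1) q.2)

/-- A sequence of elements, indexed by a linear order, is indiscernible over `A`. -/
def IndiscSeqOver (L : FirstOrder.Language.{u, u}) {M : Type u} [L.Structure M]
    (A : Set M) {ι : Type*} [LinearOrder ι] (f : ι → M) : Prop :=
  ∀ (n : ℕ) (s t : Fin n → ι), StrictMono s → StrictMono t →
    SameTypeOver L A (fun i => f (s i)) (fun i => f (t i))

/-- A family of elements is an indiscernible *set* over `A`: the type of a tuple of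
distinct elements depends only on its length. -/
def IndiscSetOver (L : FirstOrder.Language.{u, u}) {M : Type u} [L.Structure M]
    (A : Set M) {ι : Type*} (f : ι → M) : Prop :=
  ∀ (n : ℕ) (s t : Fin n → ι), Function.Injective s → Function.Injective t →
    SameTypeOver L A (fun i => f (s i)) (fun i => f (t i))

/-- `p` is a complete consistent `m`-type over `B`: all parameters come from `B`, for each
formula over `B` it contains the formula or its negation, and every finite subset is
realized (in the monster). -/
def IsTypeOver {m : ℕ} (p : Set (PFormula L M m)) (B : Set M) : Prop :=
  (∀ ψ ∈ p, ψ.Over B) ∧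
  (∀ ψ : PFormula L M m, ψ.Over B → ψ ∈ p ∨ ψ.not ∈ p) ∧
  (∀ s : Finset (PFormula L M m), ↑s ⊆ p → ∃ a : Fin m → M, ∀ ψ ∈ s, ψ.Realize a)

/-- `p` is finitely satisfiable in `A`: every finite subset of `p` is realized by a tuple
from `A`. -/
def FinSatIn {m : ℕ} (p : Set (PFormula L M m)) (A : Set M) : Prop :=
  ∀ s : Finset (PFormula L M m), ↑s ⊆ p →
    ∃ a : Fin m → M, (∀ i, a i ∈ A) ∧ ∀ ψ ∈ s, ψ.Realize a

/-- The complete type of an element `a` over the set `C`. -/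
def tpOver (L : FirstOrder.Language.{u, u}) {M : Type u} [L.Structure M]
    (a : M) (C : Set M) : Set (PFormula L M 1) :=
  {ψ | ψ.Over C ∧ ψ.Realize1 a}

/-- `p` (a type with parameters in `B`) does not split over `A`. -/
def DoesNotSplitOver {m : ℕ} (p : Set (PFormula L M m)) (B A : Set M) : Prop :=
  ∀ (n : ℕ) (b c : Fin n → M) (φ : L.Formula (Fin m ⊕ Fin n)),
    (∀ i, b i ∈ B) → (∀ i, c i ∈ B) → SameTypeOver L A b c →
    ((⟨n, φ, b⟩ : PFormula L M m) ∈ p ↔ (⟨n, φ, c⟩ : PFormula L M m) ∈ p)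

/-- `p` (a type over `B`) is definable over `A`. -/
def DefinableOver {m : ℕ} (p : Set (PFormula L M m)) (B A : Set M) : Prop :=
  ∀ (n : ℕ) (φ : L.Formula (Fin m ⊕ Fin n)),
    ∃ (k : ℕ) (d : L.Formula (Fin n ⊕ Fin k)) (e : Fin k → M), (∀ i, e i ∈ A) ∧
      ∀ b : Fin n → M, (∀ i, b i ∈ B) →
        ((⟨n, φ, b⟩ : PFormula L M m) ∈ p ↔ d.Realize (Sum.elim b e))

/-- The parametrized formula `ψ` divides over `A`. -/
def PFormula.Divides {m : ℕ} (ψ : PFormula L M m) (A : Set M) : Prop :=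
  ∃ (f : ℕ → Fin ψ.n → M) (k : ℕ), 0 < k ∧ f 0 = ψ.par ∧ IndiscTupleSeqOver L A f ∧
    ∀ s : Finset ℕ, s.card = k →
      ¬ ∃ a : Fin m → M, ∀ i ∈ s, ψ.toFormula.Realize (Sum.elim a (f i))

/-- The (partial) type `p` forks over `A`: some finite subset of `p` implies a finite
disjunction of formulas each of which divides over `A`. -/
def ForksOver {m : ℕ} (p : Set (PFormula L M m)) (A : Set M) : Prop :=
  ∃ (r : ℕ) (ψs : Fin r → PFormula L M m), (∀ j, (ψs j).Divides A) ∧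
    ∃ s : Finset (PFormula L M m), ↑s ⊆ p ∧
      ∀ a : Fin m → M, (∀ χ ∈ s, χ.Realize a) → ∃ j, (ψs j).Realize a

/-- `p` splits strongly over `A`. -/
def SplitsStronglyOver {m : ℕ} (p : Set (PFormula L M m)) (A : Set M) : Prop :=
  ∃ (n : ℕ) (f : ℕ → Fin n → M) (φ : L.Formula (Fin m ⊕ Fin n)),
    IndiscTupleSeqOver L A f ∧
    (⟨n, φ, f 0⟩ : PFormula L M m) ∈ p ∧ (PFormula.not ⟨n, φ, f 1⟩ : PFormula L M m) ∈ p

/-- Two tuples are of Lascar distance one over `A`: they lie on a common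
`A`-indiscernible sequence. -/
def LascarDistOne (L : FirstOrder.Language.{u, u}) {M : Type u} [L.Structure M]
    (A : Set M) {n : ℕ} (b c : Fin n → M) : Prop :=
  ∃ f : ℕ → Fin n → M, IndiscTupleSeqOver L A f ∧ ∃ i j : ℕ, f i = b ∧ f j = c

/-- Two tuples have the same Lascar strong type over `A` (finite Lascar distance). -/
def SameLstp (L : FirstOrder.Language.{u, u}) {M : Type u} [L.Structure M]
    (A : Set M) {n : ℕ} (b c : Fin n → M) : Prop :=
  Relation.ReflTransGen (fun x y => LascarDistOne L A x y) b c

/-- `p` (a type over `B`) Lascar-splits over `A`. -/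
def LascarSplitsOver {m : ℕ} (p : Set (PFormula L M m)) (B A : Set M) : Prop :=
  ∃ (n : ℕ) (b c : Fin n → M) (φ : L.Formula (Fin m ⊕ Fin n)),
    (∀ i, b i ∈ B) ∧ (∀ i, c i ∈ B) ∧ SameLstp L A b c ∧
    (⟨n, φ, b⟩ : PFormula L M m) ∈ p ∧ (PFormula.not ⟨n, φ, c⟩ : PFormula L M m) ∈ p

/-- The structure `M` is NIP ("dependent"): no formula alternates infinitely often on an
indiscernible sequence. -/
def IsNIP (L : FirstOrder.Language.{u, u}) (M : Type u) [L.Structure M] : Prop :=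
  ∀ (d k : ℕ) (φ : L.Formula (Fin d ⊕ Fin k)) (f : ℕ → Fin d → M) (c : Fin k → M),
    IndiscTupleSeqOver L (∅ : Set M) f →
    ¬ ({i : ℕ | φ.Realize (Sum.elim (f i) c)}.Infinite ∧
        {i : ℕ | ¬ φ.Realize (Sum.elim (f i) c)}.Infinite)

/-- The subset `N` of the monster is `κ`-saturated: every type over a subset of `N` of
size `< κ` which is finitely satisfiable is realized inside `N`. -/
def SetSaturated (L : FirstOrder.Language.{u, u}) {M : Type u} [L.Structure M]
    (N : Set M) (κ : Cardinal.{u}) : Prop :=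
  ∀ C : Set M, C ⊆ N → #C < κ → ∀ (m : ℕ) (p : Set (PFormula L M m)),
    (∀ ψ ∈ p, ψ.Over C) →
    (∀ s : Finset (PFormula L M m), ↑s ⊆ p → ∃ a : Fin m → M, ∀ ψ ∈ s, ψ.Realize a) →
    ∃ a : Fin m → M, (∀ i, a i ∈ N) ∧ ∀ ψ ∈ p, ψ.Realize a

/-- `M` is a monster model: it is saturated in every cardinality below `#M`. -/
def IsMonster (L : FirstOrder.Language.{u, u}) (M : Type u) [L.Structure M] : Prop :=
  ∀ κ : Cardinal.{u}, κ < #M → SetSaturated L (Set.univ : Set M) κ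

/-- The average type of an `ω`-indexed indiscernible set over `C`: formulas over `C` true
of all but finitely many elements of the set. -/
def AvSet (L : FirstOrder.Language.{u, u}) {M : Type u} [L.Structure M]
    (f : ℕ → M) (C : Set M) : Set (PFormula L M 1) :=
  {ψ | ψ.Over C ∧ {i : ℕ | ¬ ψ.Realize1 (f i)}.Finite}

/-- The average type of an endless indiscernible sequence over `C`: formulas over `C`
true of all sufficiently late elements of the sequence. -/
def AvSeq (L : FirstOrder.Language.{u, u}) {M : Type u} [L.Structure M]
    {ι : Type*} [LinearOrder ι] (f : ι → M) (C : Set M) : Set (PFormula L M 1) :=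
  {ψ | ψ.Over C ∧ ∃ i₀ : ι, ∀ i ≥ i₀, ψ.Realize1 (f i)}

/-- The algebraic closure of `A` in `M`. -/
def aclSet (L : FirstOrder.Language.{u, u}) {M : Type u} [L.Structure M]
    (A : Set M) : Set M :=
  {a | ∃ ψ : PFormula L M 1, ψ.Over A ∧ ψ.Realize1 a ∧ {x : M | ψ.Realize1 x}.Finite}

/-- `p ∈ S(A)` is generically stable: there is a nonforking sequence of realizations of
`p` over `A` which is an indiscernible set. -/
def GenericallyStable (p : Set (PFormula L M 1)) (A : Set M) : Prop :=
  ∃ f : ℕ → M,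
    (∀ i, ∀ ψ ∈ p, ψ.Realize1 (f i)) ∧
    IndiscSetOver L A f ∧
    ∀ i : ℕ, ¬ ForksOver (tpOver L (f i) (A ∪ f '' {j | j < i})) A

/-- The Boolean algebra of `B`-definable subsets of `A^m`. -/
def DefSub (L : FirstOrder.Language.{u, u}) {M : Type u} [L.Structure M]
    (A B : Set M) (m : ℕ) : Set (Set (Fin m → M)) :=
  {S | ∃ ψ : PFormula L M m, ψ.Over B ∧ S = {a | (∀ i, a i ∈ A) ∧ ψ.Realize a}}

/-- An ultrafilter on the Boolean algebra of `B`-definable subsets of `A^m`. -/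
structure UltraOn (L : FirstOrder.Language.{u, u}) {M : Type u} [L.Structure M]
    (A B : Set M) (m : ℕ) where
  sets : Set (Set (Fin m → M))
  subset_def : sets ⊆ DefSub L A B m
  inter_mem : ∀ S ∈ sets, ∀ T ∈ sets, S ∩ T ∈ sets
  superset_mem : ∀ S ∈ sets, ∀ T ∈ DefSub L A B m, S ⊆ T → T ∈ sets
  nonempty_mem : ∀ S ∈ sets, S.Nonempty
  ultra : ∀ S ∈ DefSub L A B m,
    S ∈ sets ∨ ({a : Fin m → M | ∀ i, a i ∈ A} \ S) ∈ sets

/-- The average type of an ultrafilter on `Def_m(A,B)` over `B`. -/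
def AvU {A B : Set M} {m : ℕ} (U : UltraOn L A B m) : Set (PFormula L M m) :=
  {ψ | ψ.Over B ∧ {a : Fin m → M | (∀ i, a i ∈ A) ∧ ψ.Realize a} ∈ U.sets}

/-!
Suppose a finite part `s` of `p` implies `⋁ⱼ ψⱼ(x, bⱼ)`, where `ψⱼ(x, bⱼ)` is `kⱼ`-inconsistent
along an `A`-indiscernible sequence `(bⱼⁱ)ᵢ` with `bⱼ⁰ = bⱼ`. All these sequences together form a
countable tuple, and the parameters of `s` together with `A` form a set `C` of size at most
`|A| + ℵ₀`, so saturation yields, one element at a time, a copy of the tuple inside `N` with the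
same type over `C`. The copy still has all the properties above, and now its entries lie in `N`,
so `p` decides the formulas `ψⱼ(x, b'ⱼⁱ)`. As `s ⊆ p`, some `ψⱼ(x, b'ⱼ⁰)` lies in `p`, and by
`kⱼ`-inconsistency some `¬ψⱼ(x, b'ⱼⁱ)` with `i > 0` lies in `p` as well; the indiscernible
sequence `b'ⱼ⁰, b'ⱼⁱ, b'ⱼⁱ⁺¹, …` witnesses strong splitting.
-/

open Set FirstOrder.Language

namespace SameTypeOver

variable {C : Set M} {γ : Type}

theorem refl (b : γ → M) : SameTypeOver L C b b := fun _ _ _ _ => Iff.rfl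

theorem symm {b c : γ → M} (h : SameTypeOver L C b c) : SameTypeOver L C c b :=
  fun k φ a ha => (h k φ a ha).symm

theorem trans {b c d : γ → M} (h₁ : SameTypeOver L C b c) (h₂ : SameTypeOver L C c d) :
    SameTypeOver L C b d :=
  fun k φ a ha => (h₁ k φ a ha).trans (h₂ k φ a ha)

theorem mono {A : Set M} {b c : γ → M} (h : SameTypeOver L C b c) (hAC : A ⊆ C) :
    SameTypeOver L A b c :=
  fun k φ a ha => h k φ a fun i => hAC (ha i)

theorem comp {δ : Type} {b c : γ → M} (h : SameTypeOver L C b c) (e : δ → γ) :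
    SameTypeOver L C (b ∘ e) (c ∘ e) := by
  intro k φ a ha
  simpa [Formula.realize_relabel, Sum.elim_comp_map] using h k (φ.relabel (Sum.map e id)) a ha

theorem mem_iff_of_definable {b c : γ → M} (h : SameTypeOver L C b c) {S : Set (γ → M)}
    (hS : C.Definable L S) : b ∈ S ↔ c ∈ S := by
  obtain ⟨C₀, hC₀, hS₀⟩ := definable_iff_finitely_definable.1 hS
  obtain ⟨φ, rfl⟩ := definable_iff_exists_formula_sum.1 hS₀
  let e := Finite.equivFin (C₀ : Set M)
  have hv : ∀ v : γ → M, Sum.elim v (fun i => (e.symm i : M)) ∘ Sum.elim (Sum.inr ∘ e) Sum.inl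
      = Sum.elim Subtype.val v := fun v => by ext (x | x) <;> simp
  simpa only [Formula.realize_relabel, hv, Set.mem_ofPred_eq] using
    h _ (φ.relabel (Sum.elim (Sum.inr ∘ e) Sum.inl)) (fun i => e.symm i) fun i => hC₀ (e.symm i).2

theorem of_forall_finset {b c : γ → M}
    (h : ∀ s : Finset γ, SameTypeOver L C (fun i : s => b i) (fun i : s => c i)) :
    SameTypeOver L C b c := by
  classical
  intro k φ a ha
  let restrict : φ.freeVarFinset → φ.freeVarFinset.toLeft ⊕ Fin k := fun x =>
    match x with
    | ⟨Sum.inl i, hi⟩ => Sum.inl ⟨i, Finset.mem_toLeft.2 hi⟩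
    | ⟨Sum.inr t, _⟩ => Sum.inr t
  have hrestrict : ∀ v : γ → M, Formula.Realize (φ.restrictFreeVar restrict)
      (Sum.elim (fun i : φ.freeVarFinset.toLeft => v i) a) ↔ φ.Realize (Sum.elim v a) :=
    fun v => BoundedFormula.realize_restrictFreeVar _ fun ⟨x, _⟩ => by cases x <;> rfl
  rw [← hrestrict b, ← hrestrict c]
  exact h _ k _ a ha

theorem of_forall_fin {b c : ℕ → M}
    (h : ∀ n, SameTypeOver L C (fun i : Fin n => b i) (fun i : Fin n => c i)) :
    SameTypeOver L C b c :=
  of_forall_finset fun s => (h (s.sup id + 1)).comp fun i : s =>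
    ⟨i, Nat.lt_succ_of_le (s.le_sup (f := id) i.2)⟩

end SameTypeOver

section Definable

variable {C : Set M} {α : Type*}

theorem definable_setOf_realize_comp {β : Type*} (φ : L.Formula β) (σ : β → α) :
    C.Definable L {v : α → M | φ.Realize (v ∘ σ)} :=
  ((empty_definable_iff.2 ⟨φ, rfl⟩).mono (empty_subset C)).preimage_comp σ

theorem definable_setOf_realize_sumElim {k : ℕ} (φ : L.Formula (α ⊕ Fin k)) {c : Fin k → M}
    (hc : ∀ i, c i ∈ C) : C.Definable L {v : α → M | φ.Realize (Sum.elim v c)} := by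
  let σ : α ⊕ Fin k → C ⊕ α := Sum.elim Sum.inr fun i => Sum.inl ⟨c i, hc i⟩
  have hσ : ∀ v : α → M, Sum.elim Subtype.val v ∘ σ = Sum.elim v c := fun v => by
    ext (i | i) <;> rfl
  exact definable_iff_exists_formula_sum.2
    ⟨φ.relabel σ, by ext v; simp only [Set.mem_ofPred_eq, Formula.realize_relabel, hσ]⟩

theorem definable_setOf_exists_forall_mem {ι β : Type*} [Finite β] (t : Finset ι)
    {S : ι → Set (α ⊕ β → M)} (hS : ∀ i, C.Definable L (S i)) :
    C.Definable L {v | ∃ u : β → M, ∀ i ∈ t, Sum.elim v u ∈ S i} := by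
  simpa only [Set.mem_iInter] using (definable_biInter_finset hS t).exists_of_finite

end Definable

namespace PFormula

variable {n m k : ℕ}

def withParams (φ : L.Formula ((Fin n ⊕ Fin m) ⊕ Fin k)) (b : Fin n → M) (c : Fin k → M) :
    PFormula L M m :=
  ⟨n + k,
    φ.relabel (Sum.elim (Sum.elim (Sum.inr ∘ Fin.castAdd k) Sum.inl) (Sum.inr ∘ Fin.natAdd n)),
    Fin.append b c⟩

theorem realize_withParams {φ : L.Formula ((Fin n ⊕ Fin m) ⊕ Fin k)} {b : Fin n → M}
    {c : Fin k → M} {x : Fin m → M} :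
    (withParams φ b c).Realize x ↔ φ.Realize (Sum.elim (Sum.elim b x) c) := by
  have : Sum.elim x (Fin.append b c) ∘
      Sum.elim (Sum.elim (Sum.inr ∘ Fin.castAdd k) Sum.inl) (Sum.inr ∘ Fin.natAdd n) =
      Sum.elim (Sum.elim b x) c := by
    ext ((i | i) | i) <;> simp
  rw [withParams, Realize, Formula.realize_relabel, this]

theorem over_withParams {B : Set M} (φ : L.Formula ((Fin n ⊕ Fin m) ⊕ Fin k)) {b : Fin n → M}
    {c : Fin k → M} (hb : ∀ i, b i ∈ B) (hc : ∀ i, c i ∈ B) : (withParams φ b c).Over B :=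
  Fin.addCases (by simpa [withParams] using hb) (by simpa [withParams] using hc)

end PFormula

theorem exists_seq_forall_prefix {α : Type*} (P : ∀ n, (Fin n → α) → Prop) (h0 : P 0 Fin.elim0)
    (hstep : ∀ n g, P n g → ∃ x, P (n + 1) (Fin.snoc g x)) :
    ∃ G : ℕ → α, ∀ n, P n fun i => G i := by
  choose next hnext using hstep
  let prefixes : ∀ n, {g : Fin n → α // P n g} := fun n =>
    Nat.rec ⟨Fin.elim0, h0⟩ (fun n g => ⟨Fin.snoc g.1 (next n g.1 g.2), hnext n g.1 g.2⟩) n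
  have hprefix : ∀ n (i : Fin n), (prefixes n).1 i = (prefixes (i + 1)).1 (Fin.last i) := by
    intro n
    induction n with
    | zero => exact finZeroElim
    | succ n ih =>
      refine Fin.lastCases rfl fun i => ?_
      simpa [prefixes, Fin.snoc_castSucc] using ih i
  refine ⟨fun i => (prefixes (i + 1)).1 (Fin.last i), fun n => ?_⟩
  convert (prefixes n).2 using 1
  exact funext fun i => (hprefix n i).symm

namespace SetSaturated

variable {N C : Set M} {κ : Cardinal.{u}}

theorem exists_sameTypeOver_sumElim (hsat : SetSaturated L N (Order.succ κ)) (hκ : ℵ₀ ≤ κ)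
    (hCN : C ⊆ N) (hC : #C ≤ κ) {n : ℕ} {b g : Fin n → M} (hgN : ∀ i, g i ∈ N)
    (hbg : SameTypeOver L C b g) {m : ℕ} (a : Fin m → M) :
    ∃ x : Fin m → M, (∀ i, x i ∈ N) ∧ SameTypeOver L C (Sum.elim b a) (Sum.elim g x) := by
  classical
  let Γ := Σ k : ℕ, L.Formula ((Fin n ⊕ Fin m) ⊕ Fin k) × (Fin k → C)
  let holds (γ : Γ) (v : Fin n ⊕ Fin m → M) : Prop :=
    γ.2.1.Realize (Sum.elim v fun t => γ.2.2 t)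
  let transport (γ : Γ) : PFormula L M m := PFormula.withParams γ.2.1 g fun t => γ.2.2 t
  -- `q` is the type of `a` over `C ∪ range b`, with `b` replaced by `g`. Each finite part of it
  -- asserts a `C`-definable property of `b`, which `g` shares; so `q` is finitely satisfiable.
  let q := transport '' {γ | holds γ (Sum.elim b a)}
  have hcard : #(C ∪ range g : Set M) < Order.succ κ :=
    Order.lt_succ_iff.2 <| (mk_union_le _ _).trans <|
      add_le_of_le hκ hC ((finite_range g).lt_aleph0.le.trans hκ)
  have hover : ∀ ψ ∈ q, ψ.Over (C ∪ range g) := by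
    rintro _ ⟨γ, -, rfl⟩
    exact PFormula.over_withParams _ (fun i => Or.inr ⟨i, rfl⟩) fun t => Or.inl (γ.2.2 t).2
  have hfin : ∀ s : Finset (PFormula L M m), ↑s ⊆ q → ∃ x, ∀ ψ ∈ s, ψ.Realize x := by
    intro s hs
    obtain ⟨t, ht, rfl⟩ := Finset.subset_set_image_iff.1 hs
    have hdef : C.Definable L
        {w : Fin n → M | ∃ x : Fin m → M, ∀ γ ∈ t, Sum.elim w x ∈ {v | holds γ v}} :=
      definable_setOf_exists_forall_mem t fun γ =>
        definable_setOf_realize_sumElim _ fun i => (γ.2.2 i).2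
    obtain ⟨x, hx⟩ := (hbg.mem_iff_of_definable hdef).1 ⟨a, fun γ hγ => ht hγ⟩
    exact ⟨x, by simpa [transport, PFormula.realize_withParams] using hx⟩
  obtain ⟨x, hxN, hx⟩ := hsat _ (union_subset hCN (range_subset_iff.2 hgN)) hcard m q hover hfin
  have htransport : ∀ γ : Γ, holds γ (Sum.elim b a) → holds γ (Sum.elim g x) :=
    fun γ hγ => PFormula.realize_withParams.1 (hx _ ⟨γ, hγ, rfl⟩)
  refine ⟨x, hxN, fun k φ c hc => ⟨htransport ⟨k, φ, fun t => ⟨c t, hc t⟩⟩, fun hg => ?_⟩⟩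
  by_contra hb
  exact htransport ⟨k, φ.not, fun t => ⟨c t, hc t⟩⟩ hb hg

theorem exists_sameTypeOver_nat (hsat : SetSaturated L N (Order.succ κ)) (hκ : ℵ₀ ≤ κ)
    (hCN : C ⊆ N) (hC : #C ≤ κ) (F : ℕ → M) :
    ∃ G : ℕ → M, (∀ i, G i ∈ N) ∧ SameTypeOver L C F G := by
  obtain ⟨G, hG⟩ := exists_seq_forall_prefix
    (fun n g => (∀ i, g i ∈ N) ∧ SameTypeOver L C (fun i : Fin n => F i) g)
    ⟨finZeroElim, by convert SameTypeOver.refl _⟩ fun n g ⟨hgN, hg⟩ => by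
      obtain ⟨x, hxN, hx⟩ :=
        hsat.exists_sameTypeOver_sumElim hκ hCN hC hgN hg fun _ : Fin 1 => F n
      refine ⟨x 0, Fin.lastCases (by simpa using hxN 0) (by simpa using hgN), ?_⟩
      convert hx.comp finSumFinEquiv.symm using 1 <;> ext i <;>
        refine Fin.lastCases ?_ (fun i => ?_) i <;> simp
  exact ⟨G, fun i => (hG (i + 1)).1 (Fin.last i), SameTypeOver.of_forall_fin fun n => (hG n).2⟩

theorem exists_sameTypeOver (hsat : SetSaturated L N (Order.succ κ)) (hκ : ℵ₀ ≤ κ)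
    (hCN : C ⊆ N) (hC : #C ≤ κ) {γ : Type} [Countable γ] (F : γ → M) :
    ∃ G : γ → M, (∀ i, G i ∈ N) ∧ SameTypeOver L C F G := by
  rcases isEmpty_or_nonempty γ with hγ | ⟨⟨i₀⟩⟩
  · exact ⟨F, isEmptyElim, SameTypeOver.refl F⟩
  obtain ⟨e, he⟩ := Countable.exists_injective_nat γ
  obtain ⟨G, hGN, hG⟩ := hsat.exists_sameTypeOver_nat hκ hCN hC (Function.extend e F fun _ => F i₀)
  refine ⟨G ∘ e, fun i => hGN (e i), ?_⟩
  simpa only [Function.extend_comp he] using hG.comp e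

end SetSaturated

namespace IndiscTupleSeqOver

variable {A : Set M} {ι : Type*} [LinearOrder ι] {d : ℕ}

theorem comp_strictMono {ι' : Type*} [LinearOrder ι'] {f : ι → Fin d → M}
    (hf : IndiscTupleSeqOver L A f) {e : ι' → ι} (he : StrictMono e) :
    IndiscTupleSeqOver L A (f ∘ e) :=
  fun n s t hs ht => hf n (e ∘ s) (e ∘ t) (he.comp hs) (he.comp ht)

theorem of_sameTypeOver {α : Type} {F G : α → M} (h : SameTypeOver L A F G)
    (σ : ι → Fin d → α) (hF : IndiscTupleSeqOver L A fun i => F ∘ σ i) :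
    IndiscTupleSeqOver L A fun i => G ∘ σ i := by
  intro n s t hs ht
  have hsub : ∀ s : Fin n → ι, SameTypeOver L A (fun q : Fin n × Fin d => F (σ (s q.1) q.2))
      (fun q : Fin n × Fin d => G (σ (s q.1) q.2)) :=
    fun s => h.comp fun q : Fin n × Fin d => σ (s q.1) q.2
  exact ((hsub s).symm.trans (hF n s t hs ht)).trans (hsub t)

end IndiscTupleSeqOver

def IsKInconsistent {m n : ℕ} (φ : L.Formula (Fin m ⊕ Fin n)) (f : ℕ → Fin n → M) (k : ℕ) :
    Prop :=
  ∀ s : Finset ℕ, s.card = k → ¬ ∃ a : Fin m → M, ∀ i ∈ s, φ.Realize (Sum.elim a (f i))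

theorem IsKInconsistent.of_sameTypeOver {C : Set M} {m n k : ℕ} {φ : L.Formula (Fin m ⊕ Fin n)}
    {α : Type} {F G : α → M} (h : SameTypeOver L C F G) (σ : ℕ → Fin n → α)
    (hF : IsKInconsistent φ (fun i => F ∘ σ i) k) : IsKInconsistent φ (fun i => G ∘ σ i) k := by
  intro s hs hG
  have hdef : C.Definable L
      {v : α → M | ∃ a : Fin m → M, ∀ i ∈ s, φ.Realize (Sum.elim a (v ∘ σ i))} := by
    simpa [Sum.comp_elim, ← Function.comp_assoc] using definable_setOf_exists_forall_mem s
      (S := fun i => {w : α ⊕ Fin m → M | φ.Realize (w ∘ Sum.elim Sum.inr (Sum.inl ∘ σ i))})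
      fun i => definable_setOf_realize_comp φ _
  exact hF s hs ((h.mem_iff_of_definable hdef).2 hG)

theorem definable_setOf_forall_imp_exists {C : Set M} {α : Type*} {m : ℕ}
    (s : Finset (PFormula L M m)) (hs : ∀ χ ∈ s, χ.Over C) {ι : Type*} [Finite ι] {n : ι → ℕ}
    (φ : ∀ j, L.Formula (Fin m ⊕ Fin (n j))) (σ : ∀ j, Fin (n j) → α) :
    C.Definable L {v : α → M | ∀ a : Fin m → M,
      (∀ χ ∈ s, χ.Realize a) → ∃ j, (φ j).Realize (Sum.elim a (v ∘ σ j))} := by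
  have hχ : ∀ χ : s, C.Definable L {w : α ⊕ Fin m → M | χ.1.Realize (w ∘ Sum.inr)} :=
    fun χ => (definable_setOf_realize_sumElim _ (hs χ.1 χ.2)).preimage_comp Sum.inr
  have hφ : ∀ j, C.Definable L
      {w : α ⊕ Fin m → M | (φ j).Realize (w ∘ Sum.elim Sum.inr (Sum.inl ∘ σ j))} :=
    fun j => definable_setOf_realize_comp _ _
  simpa [Sum.comp_elim, ← Function.comp_assoc] using
    ((definable_iInter_of_finite hχ).himp (definable_iUnion_of_finite hφ)).forall_of_finite

namespace IsTypeOver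

variable {N : Set M} {m : ℕ} {p : Set (PFormula L M m)}

theorem mem_not_of_notMem (hp : IsTypeOver p N) {ψ : PFormula L M m} (hψ : ψ.Over N)
    (h : ψ ∉ p) : ψ.not ∈ p :=
  (hp.2.1 ψ hψ).resolve_left h

theorem exists_mem_of_forall_imp_exists (hp : IsTypeOver p N) {s : Finset (PFormula L M m)}
    (hs : ↑s ⊆ p) {ι : Type*} [Fintype ι] (ψ : ι → PFormula L M m) (hψ : ∀ j, (ψ j).Over N)
    (himp : ∀ a, (∀ χ ∈ s, χ.Realize a) → ∃ j, (ψ j).Realize a) : ∃ j, ψ j ∈ p := by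
  classical
  by_contra! hnone
  obtain ⟨a, ha⟩ := hp.2.2 (s ∪ Finset.univ.image fun j => (ψ j).not) <| by
    intro χ hχ
    rcases Finset.mem_union.1 hχ with hχ | hχ
    · exact hs hχ
    · obtain ⟨j, -, rfl⟩ := Finset.mem_image.1 hχ
      exact hp.mem_not_of_notMem (hψ j) (hnone j)
  obtain ⟨j, hj⟩ := himp a fun χ hχ => ha χ (Finset.mem_union_left _ hχ)
  exact ha _ (Finset.mem_union_right _ (Finset.mem_image_of_mem _ (Finset.mem_univ j))) hj

theorem splitsStronglyOver_of_isKInconsistent (hp : IsTypeOver p N) {A : Set M} {n k : ℕ}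
    {φ : L.Formula (Fin m ⊕ Fin n)} {f : ℕ → Fin n → M} (hfN : ∀ i v, f i v ∈ N)
    (hind : IndiscTupleSeqOver L A f) (hinc : IsKInconsistent φ f k)
    (h0 : (⟨n, φ, f 0⟩ : PFormula L M m) ∈ p) : SplitsStronglyOver p A := by
  classical
  obtain ⟨i, hi⟩ : ∃ i, (⟨n, φ, f i⟩ : PFormula L M m) ∉ p := by
    by_contra! hall
    obtain ⟨a, ha⟩ := hp.2.2 ((Finset.range k).image fun i => ⟨n, φ, f i⟩) fun ψ hψ => by
      obtain ⟨i, -, rfl⟩ := Finset.mem_image.1 hψ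
      exact hall i
    exact hinc _ (Finset.card_range k) ⟨a, fun i hi => ha _ (Finset.mem_image_of_mem _ hi)⟩
  have hi0 : i ≠ 0 := by rintro rfl; exact hi h0
  let e : ℕ → ℕ := fun t => if t = 0 then 0 else i + (t - 1)
  have he : StrictMono e := fun s t hst => by simp only [e]; split_ifs <;> omega
  refine ⟨n, f ∘ e, φ, hind.comp_strictMono he, by simpa [e] using h0, ?_⟩
  simpa [e] using hp.mem_not_of_notMem (fun v => hfN i v) hi

end IsTypeOver

theorem exists_superset_over_finset {A N : Set M} (hAN : A ⊆ N) {m : ℕ}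
    {s : Finset (PFormula L M m)} (hs : ∀ χ ∈ s, χ.Over N) :
    ∃ C, A ⊆ C ∧ C ⊆ N ∧ #C ≤ #A + ℵ₀ ∧ ∀ χ ∈ s, χ.Over C := by
  refine ⟨A ∪ ⋃ χ ∈ s, range χ.par, subset_union_left, union_subset hAN ?_, ?_,
    fun χ hχ i => Or.inr (mem_biUnion hχ (mem_range_self i))⟩
  · exact iUnion₂_subset fun χ hχ => range_subset_iff.2 (hs χ hχ)
  · exact (mk_union_le _ _).trans <| add_le_add le_rfl
      (s.finite_toSet.biUnion fun χ _ => finite_range χ.par).lt_aleph0.le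

/-- If `N` is an `(|A|+ℵ₀)⁺`-saturated model containing `A` and `p ∈ S(N)`
forks over `A`, then `p` splits strongly over `A`. -/
theorem forking_implies_strong_splitting_over_saturated_model {m : ℕ}
    (A N : Set M) (hAN : A ⊆ N)
    (hsat : SetSaturated L N (Order.succ (#A + ℵ₀)))
    (p : Set (PFormula L M m)) (hp : IsTypeOver p N)
    (hfork : ForksOver p A) :
    SplitsStronglyOver p A := by
  obtain ⟨r, ψ, hdiv, s, hsp, himp⟩ := hfork
  choose f k _ hf0 hind hinc using hdiv
  obtain ⟨C, hAC, hCN, hC, hsC⟩ := exists_superset_over_finset hAN fun χ hχ => hp.1 χ (hsp hχ)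
  let σ (j : Fin r) (i : ℕ) (v : Fin (ψ j).n) : Σ j, ℕ × Fin (ψ j).n := ⟨j, i, v⟩
  obtain ⟨G, hGN, hG⟩ := hsat.exists_sameTypeOver le_add_self hCN hC
    fun x : Σ j, ℕ × Fin (ψ j).n => f x.1 x.2.1 x.2.2
  have himpG := (hG.mem_iff_of_definable (definable_setOf_forall_imp_exists s hsC
    (fun j => (ψ j).toFormula) fun j => σ j 0)).1 fun a ha =>
      (himp a ha).imp fun j hj => by rw [PFormula.Realize, ← hf0] at hj; exact hj
  obtain ⟨j, hj⟩ := hp.exists_mem_of_forall_imp_exists hsp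
    (fun j => ⟨_, (ψ j).toFormula, G ∘ σ j 0⟩) (fun j v => hGN _) himpG
  exact hp.splitsStronglyOver_of_isKInconsistent (fun i v => hGN _)
    ((hind j).of_sameTypeOver (hG.mono hAC) (σ j))
    (IsKInconsistent.of_sameTypeOver hG (σ j) (hinc j)) hj
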